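/- Let M ≥ 3 and let 𝒞^{∧-} = {w ∈ ℝ^M : ∑_{i=1}^M w_i = 1, w ≥ 0, 2w_i ≥ w_{i-1} + w_{i+1} for 2 ≤ i ≤ M-1, w_1 ≥ w_2 ≥ … ≥ w_M} be the set of concave and nonincreasing probability vectors. Then the set of extreme points of 𝒞^{∧-} is exactly {v_1, …, v_M}, where v_1 = (1/M)·(1,…,1)ᵀ, and for 2 ≤ i ≤ M the vector v_i has coordinates v_i(m) = (i-1) r_i for 1 ≤ m ≤ M-i and v_i(m) = (M-m) r_i for M-i < m ≤ M, with r_i = 2/((2M-i)(i-1)). -/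

import Mathlib

open Finset


private lemma aux_tight (a b p q : ℝ) (ha : 0 < a) (hb : 0 < b) (hp : p ≤ 0) (hq : q ≤ 0)
    (h : a * p + b * q = 0) : p = 0 ∧ q = 0 := by
  constructor <;> nlinarith

private lemma aux_tele (f : ℕ → ℝ) : ∀ a b : ℕ, a ≤ b →
    ∑ j ∈ Finset.Ico a b, (f j - f (j + 1)) = f a - f b := by
  intro a b h
  induction b, h using Nat.le_induction with
  | base => simp
  | succ b hb ih => rw [Finset.sum_Ico_succ_top hb, ih]; ring

private lemma aux_sumE (D E : ℕ → ℝ) (hE0 : E 0 = D 0) (hE : ∀ j, 1 ≤ j → E j = D j - D (j - 1)) :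
    ∀ m, ∑ j ∈ Finset.range (m + 1), E j = D m := by
  intro m
  induction m with
  | zero => simpa using hE0
  | succ m ih =>
    rw [Finset.sum_range_succ, ih, hE (m + 1) (by omega)]
    simp

private lemma aux_key (M : ℕ) (hM : 3 ≤ M) (D E : ℕ → ℝ) (hE0 : E 0 = D 0)
    (hE : ∀ j, 1 ≤ j → E j = D j - D (j - 1)) :
    ∀ k, k ≤ M - 1 →
      ∑ t ∈ Finset.Ico 1 M, E (M - 1 - t) * ((min t k : ℕ) : ℝ)
        = ∑ j ∈ Finset.Ico (M - 1 - k) (M - 1), D j := by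
  intro k
  induction k with
  | zero => simp
  | succ k ih =>
    intro hk
    have ihk := ih (by omega)
    have h1 : ∀ t ∈ Finset.Ico 1 M,
        E (M - 1 - t) * ((min t (k + 1) : ℕ) : ℝ)
          = E (M - 1 - t) * ((min t k : ℕ) : ℝ) + (if k + 1 ≤ t then E (M - 1 - t) else 0) := by
      intro t ht
      by_cases hc : k + 1 ≤ t
      · rw [if_pos hc]
        have e1 : min t (k + 1) = k + 1 := by omega
        have e2 : min t k = k := by omega
        rw [e1, e2]; push_cast; ring
      · rw [if_neg hc]
        have e1 : min t (k + 1) = min t k := by omega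
        rw [e1]; ring
    rw [Finset.sum_congr rfl h1, Finset.sum_add_distrib]
    have h2 : ∑ t ∈ Finset.Ico 1 M, (if k + 1 ≤ t then E (M - 1 - t) else 0)
        = ∑ t ∈ Finset.Ico (k + 1) M, E (M - 1 - t) := by
      rw [← Finset.sum_filter]
      congr 1
      ext t
      simp only [Finset.mem_filter, Finset.mem_Ico]
      omega
    have h3 : ∑ t ∈ Finset.Ico (k + 1) M, E (M - 1 - t)
        = ∑ j ∈ Finset.range (M - 1 - k), E j := by
      refine Finset.sum_nbij' (fun t => M - 1 - t) (fun j => M - 1 - j) ?_ ?_ ?_ ?_ ?_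
      · intro t ht; simp only [Finset.mem_Ico] at ht; simp only [Finset.mem_range]; omega
      · intro j hj; simp only [Finset.mem_range] at hj; simp only [Finset.mem_Ico]; omega
      · intro t ht; simp only [Finset.mem_Ico] at ht; omega
      · intro j hj; simp only [Finset.mem_range] at hj; omega
      · intro t ht; rfl
    have h4 : ∑ j ∈ Finset.range (M - 1 - k), E j = D (M - 2 - k) := by
      have e : M - 1 - k = (M - 2 - k) + 1 := by omega
      rw [e]; exact aux_sumE D E hE0 hE _
    have h5 : ∑ j ∈ Finset.Ico (M - 1 - (k + 1)) (M - 1), D j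
        = D (M - 2 - k) + ∑ j ∈ Finset.Ico (M - 1 - k) (M - 1), D j := by
      have e1 : M - 1 - (k + 1) = M - 2 - k := by omega
      have e2 : M - 2 - k + 1 = M - 1 - k := by omega
      rw [e1, Finset.sum_eq_sum_Ico_succ_bot (by omega), e2]
    rw [h2, h3, h4, h5, ihk]
    ring

private lemma aux_summin (M t : ℕ) (h1 : 1 ≤ t) (h2 : t + 1 ≤ M) :
    (∑ i ∈ Finset.range M, ((min t (M - 1 - i) : ℕ) : ℝ)) * 2
      = (t : ℝ) * (2 * (M : ℝ) - (t : ℝ) - 1) := by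
  have hnat : (∑ i ∈ Finset.range M, min t (M - 1 - i)) * 2 = t * (2 * M - t - 1) := by
    have hre : ∑ i ∈ Finset.range M, min t (M - 1 - i) = ∑ j ∈ Finset.range M, min t j :=
      Finset.sum_range_reflect (fun j => min t j) M
    rw [hre, Finset.range_eq_Ico, ← Finset.sum_Ico_consecutive _ (Nat.zero_le t) (by omega : t ≤ M)]
    have ha : ∑ j ∈ Finset.Ico 0 t, min t j = ∑ j ∈ Finset.range t, j := by
      rw [← Finset.range_eq_Ico]
      exact Finset.sum_congr rfl (fun j hj => by simp only [Finset.mem_range] at hj; omega)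
    have hb : ∑ j ∈ Finset.Ico t M, min t j = (M - t) * t := by
      rw [Finset.sum_congr rfl (fun j hj => by
        simp only [Finset.mem_Ico] at hj
        exact (by omega : min t j = t)), Finset.sum_const, Nat.card_Ico, smul_eq_mul]
    rw [ha, hb, add_mul, Finset.sum_range_id_mul_two]
    obtain ⟨s, rfl⟩ : ∃ s, t = s + 1 := ⟨t - 1, by omega⟩
    obtain ⟨u, rfl⟩ : ∃ u, M = (s + 1) + u := ⟨M - (s + 1), by omega⟩
    rw [show s + 1 - 1 = s from by omega, show s + 1 + u - (s + 1) = u from by omega,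
      show 2 * (s + 1 + u) - (s + 1) - 1 = s + 2 * u from by omega]
    ring
  have h' := congrArg (Nat.cast : ℕ → ℝ) hnat
  rw [show 2 * M - t - 1 = 2 * M - (t + 1) from by omega, Nat.cast_mul, Nat.cast_mul,
    Nat.cast_sub (by omega : t + 1 ≤ 2 * M), Nat.cast_sum] at h'
  push_cast at h' ⊢
  linear_combination h'


private lemma aux_uniq (M t : ℕ) (hM : 3 ≤ M) (ht1 : 1 ≤ t) (ht2 : t + 1 ≤ M)
    (x : ℕ → ℝ)
    (hlast : x (M - 1) = 0)
    (hsec : ∀ i, 1 ≤ i → i + 2 ≤ M → i ≠ M - 1 - t → x (i - 1) + x (i + 1) = 2 * x i)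
    (hflat : ∀ i, i + t + 2 ≤ M → x i = x (i + 1)) :
    ∀ k, k ≤ M - 1 → x (M - 1 - k) = ((min t k : ℕ) : ℝ) * x (M - 2) := by
  intro k
  induction k using Nat.strong_induction_on with
  | _ k ih =>
    intro hk
    match k with
    | 0 => simpa using hlast
    | 1 =>
      rw [show min t 1 = 1 from by omega, show M - 1 - 1 = M - 2 from by omega]
      push_cast; ring
    | (m + 2) =>
      have ih1 := ih (m + 1) (by omega) (by omega)
      have ih2 := ih m (by omega) (by omega)
      by_cases hc : m + 2 ≤ t
      · have hs := hsec (M - 2 - m) (by omega) (by omega) (by omega)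
        rw [show M - 2 - m - 1 = M - 1 - (m + 2) from by omega,
          show M - 2 - m + 1 = M - 1 - m from by omega,
          show M - 2 - m = M - 1 - (m + 1) from by omega] at hs
        rw [ih1, ih2, show min t (m + 1) = m + 1 from by omega,
          show min t m = m from by omega] at hs
        rw [show min t (m + 2) = m + 2 from by omega]
        push_cast at hs ⊢
        linarith
      · have hf := hflat (M - 1 - (m + 2)) (by omega)
        rw [show M - 1 - (m + 2) + 1 = M - 1 - (m + 1) from by omega] at hf
        rw [hf, ih1, show min t (m + 1) = t from by omega,
          show min t (m + 2) = t from by omega]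


set_option maxHeartbeats 1000000

/-- The extreme points of the set of concave and nonincreasing probability vectors in `ℝ^M`
(`M ≥ 3`) are exactly the `M` vectors `v_1 = (1/M)1`, and for `2 ≤ i ≤ M` (1-based) the vector
with coordinates `(i-1)r_i` for `m ≤ M-i` and `(M-m)r_i` for `m > M-i`, `r_i = 2/((2M-i)(i-1))`
(0-based vertex index `t` encodes `i = t+1`). -/
theorem stmt12 (M : ℕ) (hM : 3 ≤ M)
    (S : Set (Fin M → ℝ))
    (hS : S = {w : Fin M → ℝ | ∑ i, w i = 1 ∧ (∀ i, 0 ≤ w i) ∧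
        (∀ i : Fin M, ∀ (h1 : 0 < (i : ℕ)) (h2 : (i : ℕ) < M - 1),
          w ⟨(i : ℕ) - 1, by omega⟩ + w ⟨(i : ℕ) + 1, by omega⟩ ≤ 2 * w i) ∧
        ∀ i j : Fin M, i ≤ j → w j ≤ w i})
    (v : Fin M → (Fin M → ℝ))
    (hv : v = fun (t i : Fin M) =>
      if (t : ℕ) = 0 then 1 / (M : ℝ)
      else if (i : ℕ) + (t : ℕ) + 2 ≤ M then
        ((t : ℕ) : ℝ) * (2 / ((2 * (M : ℝ) - (((t : ℕ) : ℝ) + 1)) * ((t : ℕ) : ℝ)))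
      else
        ((M : ℝ) - 1 - ((i : ℕ) : ℝ))
          * (2 / ((2 * (M : ℝ) - (((t : ℕ) : ℝ) + 1)) * ((t : ℕ) : ℝ)))) :
    S.extremePoints ℝ = Set.range v := by
  have hM0 : (0:ℝ) < (M : ℝ) := by positivity
  set rr : ℕ → ℝ := fun tn => 2 / ((2 * (M : ℝ) - ((tn : ℝ) + 1)) * (tn : ℝ)) with hrr
  have hrrden : ∀ tn : ℕ, 1 ≤ tn → tn + 1 ≤ M →
      0 < (2 * (M : ℝ) - ((tn : ℝ) + 1)) * (tn : ℝ) := by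
    intro tn a b
    have h1 : (1:ℝ) ≤ (tn:ℝ) := by exact_mod_cast a
    have h2 : (tn:ℝ) + 1 ≤ (M:ℝ) := by exact_mod_cast b
    nlinarith
  have hrrpos : ∀ tn : ℕ, 1 ≤ tn → tn + 1 ≤ M → 0 < rr tn := by
    intro tn a b
    rw [hrr]
    exact div_pos (by norm_num) (hrrden tn a b)
  -- min formula for v
  have hvN : ∀ t i : Fin M, v t i =
      if (t : ℕ) = 0 then 1 / (M : ℝ)
      else ((min (t : ℕ) (M - 1 - (i : ℕ)) : ℕ) : ℝ) * rr (t : ℕ) := by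
    intro t i
    rw [hv]
    dsimp only
    by_cases ht : (t : ℕ) = 0
    · rw [if_pos ht, if_pos ht]
    · rw [if_neg ht, if_neg ht]
      have hiM : (i : ℕ) < M := i.isLt
      by_cases hi : (i : ℕ) + (t : ℕ) + 2 ≤ M
      · rw [if_pos hi, show min (t : ℕ) (M - 1 - (i : ℕ)) = (t : ℕ) from by omega, hrr]
      · rw [if_neg hi, show min (t : ℕ) (M - 1 - (i : ℕ)) = M - 1 - (i : ℕ) from by omega, hrr]
        have : ((M - 1 - (i : ℕ) : ℕ) : ℝ) = (M : ℝ) - 1 - ((i : ℕ) : ℝ) := by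
          rw [Nat.cast_sub (by omega), Nat.cast_sub (by omega)]
          push_cast
          ring
        rw [this]
    -- sum of each vertex is 1
  have hsum_v : ∀ t : Fin M, ∑ i, v t i = 1 := by
    intro t
    by_cases ht : (t : ℕ) = 0
    · rw [Finset.sum_congr rfl (fun i _ => by rw [hvN t i, if_pos ht])]
      rw [Finset.sum_const, Finset.card_univ, Fintype.card_fin, nsmul_eq_mul]
      field_simp
    · rw [Finset.sum_congr rfl (fun i _ => by rw [hvN t i, if_neg ht])]
      rw [← Finset.sum_mul]
      have hconv : ∑ i : Fin M, ((min (t : ℕ) (M - 1 - (i : ℕ)) : ℕ) : ℝ)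
          = ∑ n ∈ Finset.range M, ((min (t : ℕ) (M - 1 - n) : ℕ) : ℝ) :=
        Fin.sum_univ_eq_sum_range (fun n => ((min (t : ℕ) (M - 1 - n) : ℕ) : ℝ)) M
      rw [hconv]
      have hs := aux_summin M (t : ℕ) (by omega) (by have := t.isLt; omega)
      have hne : (2 * (M : ℝ) - (((t:ℕ) : ℝ) + 1)) * ((t:ℕ) : ℝ) ≠ 0 :=
        ne_of_gt (hrrden (t : ℕ) (by omega) (by have := t.isLt; omega))
      rw [hrr]
      show (∑ n ∈ Finset.range M, ((min (t : ℕ) (M - 1 - n) : ℕ) : ℝ)) * (2 / ((2 * (M : ℝ) - (((t:ℕ) : ℝ) + 1)) * ((t:ℕ) : ℝ))) = 1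
      rw [mul_div_assoc', div_eq_one_iff_eq hne]
      linear_combination hs
  -- each vertex belongs to S
  have hvS : ∀ t : Fin M, v t ∈ S := by
    intro t
    rw [hS]
    have htM : (t : ℕ) < M := t.isLt
    refine ⟨hsum_v t, ?_, ?_, ?_⟩
    · intro i
      rw [hvN t i]
      by_cases ht : (t : ℕ) = 0
      · rw [if_pos ht]; positivity
      · rw [if_neg ht]
        exact mul_nonneg (Nat.cast_nonneg _) (hrrpos (t : ℕ) (by omega) (by omega)).le
    · intro i h1 h2
      rw [hvN t i, hvN t ⟨(i : ℕ) - 1, by omega⟩, hvN t ⟨(i : ℕ) + 1, by omega⟩]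
      by_cases ht : (t : ℕ) = 0
      · rw [if_pos ht, if_pos ht, if_pos ht]; linarith
      · rw [if_neg ht, if_neg ht, if_neg ht]
        have hkey : min (t:ℕ) (M - 1 - (((⟨(i : ℕ) - 1, by omega⟩ : Fin M)) : ℕ))
              + min (t:ℕ) (M - 1 - (((⟨(i : ℕ) + 1, by omega⟩ : Fin M)) : ℕ))
            ≤ 2 * min (t:ℕ) (M - 1 - (i : ℕ)) := by
          simp only [Fin.val_mk]
          omega
        have hcast : ((min (t:ℕ) (M - 1 - (((⟨(i : ℕ) - 1, by omega⟩ : Fin M)) : ℕ)) : ℕ) : ℝ)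
              + ((min (t:ℕ) (M - 1 - (((⟨(i : ℕ) + 1, by omega⟩ : Fin M)) : ℕ)) : ℕ) : ℝ)
            ≤ 2 * ((min (t:ℕ) (M - 1 - (i : ℕ)) : ℕ) : ℝ) := by exact_mod_cast hkey
        have hr := (hrrpos (t : ℕ) (by omega) (by omega)).le
        nlinarith [hcast, hr]
    · intro i j hij
      rw [hvN t i, hvN t j]
      by_cases ht : (t : ℕ) = 0
      · rw [if_pos ht, if_pos ht]
      · rw [if_neg ht, if_neg ht]
        have hkey : min (t:ℕ) (M - 1 - (j : ℕ)) ≤ min (t:ℕ) (M - 1 - (i : ℕ)) := by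
          have : (i : ℕ) ≤ (j : ℕ) := hij
          omega
        have hcast : ((min (t:ℕ) (M - 1 - (j : ℕ)) : ℕ) : ℝ)
            ≤ ((min (t:ℕ) (M - 1 - (i : ℕ)) : ℕ) : ℝ) := by exact_mod_cast hkey
        have hr := (hrrpos (t : ℕ) (by omega) (by omega)).le
        nlinarith [hcast, hr]
  -- S is convex
  have hconvS : Convex ℝ S := by
    rw [hS]
    intro x hx y hy a b ha hb hab
    obtain ⟨p1, p2, p3, p4⟩ := hx
    obtain ⟨q1, q2, q3, q4⟩ := hy
    refine ⟨?_, ?_, ?_, ?_⟩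
    · simp only [Pi.add_apply, Pi.smul_apply, smul_eq_mul]
      rw [Finset.sum_add_distrib, ← Finset.mul_sum, ← Finset.mul_sum, p1, q1]
      linarith
    · intro i
      simp only [Pi.add_apply, Pi.smul_apply, smul_eq_mul]
      exact add_nonneg (mul_nonneg ha (p2 i)) (mul_nonneg hb (q2 i))
    · intro i h1 h2
      simp only [Pi.add_apply, Pi.smul_apply, smul_eq_mul]
      nlinarith [p3 i h1 h2, q3 i h1 h2, ha, hb]
    · intro i j hij
      simp only [Pi.add_apply, Pi.smul_apply, smul_eq_mul]
      nlinarith [p4 i j hij, q4 i j hij, ha, hb]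
  -- decomposition: S ⊆ convexHull of vertices
  have hdecomp : S ⊆ convexHull ℝ (Set.range v) := by
    intro w hw
    rw [hS] at hw
    obtain ⟨hsum, hpos, hconc, hmono⟩ := hw
    set W : ℕ → ℝ := fun n => if h : n < M then w ⟨n, h⟩ else 0 with hWdef
    have hWval : ∀ (n : ℕ) (h : n < M), W n = w ⟨n, h⟩ := fun n h => dif_pos h
    set D : ℕ → ℝ := fun j => W j - W (j + 1) with hDdef
    set E : ℕ → ℝ := fun j => if j = 0 then D 0 else D j - D (j - 1) with hEdef
    have hE0 : E 0 = D 0 := if_pos rfl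
    have hE1 : ∀ j, 1 ≤ j → E j = D j - D (j - 1) := fun j hj => if_neg (by omega)
    have hEnn : ∀ j, j ≤ M - 2 → 0 ≤ E j := by
      intro j hj
      by_cases h0 : j = 0
      · subst h0
        rw [hE0]
        have : W 0 = w ⟨0, by omega⟩ := hWval 0 (by omega)
        have h1 : W 1 = w ⟨1, by omega⟩ := hWval 1 (by omega)
        have hm := hmono ⟨0, by omega⟩ ⟨1, by omega⟩ (by simp [Fin.le_def])
        simp only [hDdef]
        rw [this, h1]
        linarith
      · rw [hE1 j (by omega)]
        have hcj := hconc ⟨j, by omega⟩ (show 0 < j by omega) (show j < M - 1 by omega)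
        have heq : D j - D (j - 1) = 2 * W j - W (j + 1) - W (j - 1) := by
          simp only [hDdef]
          rw [show j - 1 + 1 = j from by omega]
          ring
        rw [heq, hWval j (by omega), hWval (j + 1) (by omega), hWval (j - 1) (by omega)]
        linarith [hcj]
    set lam : Fin M → ℝ := fun t => if (t : ℕ) = 0 then (M : ℝ) * W (M - 1)
        else E (M - 1 - (t : ℕ)) * (((t:ℕ) : ℝ) * (2 * (M : ℝ) - ((t:ℕ) : ℝ) - 1) / 2) with hlam
    have hlamnn : ∀ t : Fin M, 0 ≤ lam t := by
      intro t
      simp only [hlam]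
      by_cases ht : (t : ℕ) = 0
      · rw [if_pos ht, hWval (M - 1) (by omega)]
        exact mul_nonneg (by positivity) (hpos _)
      · rw [if_neg ht]
        have htM : (t : ℕ) < M := t.isLt
        refine mul_nonneg (hEnn _ (by omega)) ?_
        have h1 : (1:ℝ) ≤ ((t:ℕ):ℝ) := by exact_mod_cast (show 1 ≤ (t:ℕ) by omega)
        have h2 : ((t:ℕ):ℝ) + 1 ≤ (M:ℝ) := by exact_mod_cast (show (t:ℕ) + 1 ≤ M by omega)
        nlinarith
    have hpt : ∀ i : Fin M, ∑ t, lam t * v t i = w i := by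
      intro i
      set G : ℕ → ℝ := fun tn =>
        (if tn = 0 then (M : ℝ) * W (M - 1)
          else E (M - 1 - tn) * ((tn : ℝ) * (2 * (M : ℝ) - (tn : ℝ) - 1) / 2)) *
        (if tn = 0 then 1 / (M : ℝ)
          else ((min tn (M - 1 - (i : ℕ)) : ℕ) : ℝ) * rr tn) with hG
      have e0 : ∀ t : Fin M, lam t * v t i = G (t : ℕ) := by
        intro t
        rw [hvN t i]
      rw [Finset.sum_congr rfl (fun t _ => e0 t)]
      rw [Fin.sum_univ_eq_sum_range G M]
      rw [Finset.range_eq_Ico, Finset.sum_eq_sum_Ico_succ_bot (show 0 < M by omega)]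
      have g0 : G 0 = W (M - 1) := by
        simp only [hG, if_pos rfl, ↓reduceIte]
        field_simp
      have gmid : ∀ tn ∈ Finset.Ico 1 M,
          G tn = E (M - 1 - tn) * ((min tn (M - 1 - (i : ℕ)) : ℕ) : ℝ) := by
        intro tn htn
        simp only [Finset.mem_Ico] at htn
        have hne : (2 * (M : ℝ) - ((tn : ℝ) + 1)) * (tn : ℝ) ≠ 0 :=
          ne_of_gt (hrrden tn (by omega) (by omega))
        simp only [hG, hrr]
        rw [if_neg (by omega), if_neg (by omega)]
        have key : (tn:ℝ) * (2 * (M:ℝ) - (tn:ℝ) - 1) / 2 * (2 / ((2 * (M:ℝ) - ((tn:ℝ) + 1)) * (tn:ℝ))) = 1 := by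
          rw [div_mul_div_comm, div_eq_one_iff_eq (mul_ne_zero two_ne_zero hne)]; ring
        linear_combination (E (M - 1 - tn) * ((min tn (M - 1 - (i : ℕ)) : ℕ) : ℝ)) * key
      rw [g0, Finset.sum_congr rfl gmid]
      rw [aux_key M hM D E hE0 hE1 (M - 1 - (i : ℕ)) (by omega)]
      rw [show M - 1 - (M - 1 - (i : ℕ)) = (i : ℕ) from by have := i.isLt; omega]
      have htel : ∑ j ∈ Finset.Ico (i : ℕ) (M - 1), D j = W (i : ℕ) - W (M - 1) := by
        simp only [hDdef]
        exact aux_tele W (i : ℕ) (M - 1) (by have := i.isLt; omega)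
      rw [htel, hWval (i : ℕ) i.isLt]
      ring_nf
    have hlsum : ∑ t, lam t = 1 := by
      calc ∑ t, lam t = ∑ t : Fin M, ∑ i, lam t * v t i := by
            refine Finset.sum_congr rfl fun t _ => ?_
            rw [← Finset.mul_sum, hsum_v t, mul_one]
        _ = ∑ i, ∑ t : Fin M, lam t * v t i := Finset.sum_comm
        _ = ∑ i, w i := Finset.sum_congr rfl (fun i _ => hpt i)
        _ = 1 := hsum
    have hw' : w = Finset.univ.centerMass lam v := by
      rw [Finset.centerMass_eq_of_sum_1 _ _ hlsum]
      funext i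
      rw [Finset.sum_apply]
      simp only [Pi.smul_apply, smul_eq_mul]
      exact (hpt i).symm
    rw [hw']
    exact Finset.centerMass_mem_convexHull _ (fun t _ => hlamnn t)
      (by rw [hlsum]; norm_num) (fun t _ => Set.mem_range_self t)
  -- each vertex is an extreme point
  have hextreme : ∀ t : Fin M, v t ∈ S.extremePoints ℝ := by
    intro t
    rw [mem_extremePoints]
    refine ⟨hvS t, ?_⟩
    have claim : ∀ (a b : ℝ) (y z : Fin M → ℝ), 0 < a → 0 < b → a + b = 1 →
        y ∈ S → z ∈ S → (∀ i, a * y i + b * z i = v t i) → y = v t := by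
      intro a b y z ha hb hab hy hz hpt
      rw [hS] at hy hz
      obtain ⟨hy1, hy2, hy3, hy4⟩ := hy
      obtain ⟨hz1, hz2, hz3, hz4⟩ := hz
      by_cases ht0 : (t : ℕ) = 0
      · -- constant vertex
        have hadj : ∀ (n : ℕ) (h : n + 1 < M), y ⟨n + 1, h⟩ = y ⟨n, by omega⟩ := by
          intro n h
          have e1 : y ⟨n + 1, h⟩ ≤ y ⟨n, by omega⟩ :=
            hy4 ⟨n, by omega⟩ ⟨n + 1, h⟩ (by simp [Fin.le_def])
          have e2 : z ⟨n + 1, h⟩ ≤ z ⟨n, by omega⟩ :=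
            hz4 ⟨n, by omega⟩ ⟨n + 1, h⟩ (by simp [Fin.le_def])
          have p1 := hpt ⟨n, by omega⟩
          have p2 := hpt ⟨n + 1, h⟩
          rw [hvN t ⟨n, by omega⟩, if_pos ht0] at p1
          rw [hvN t ⟨n + 1, h⟩, if_pos ht0] at p2
          nlinarith
        have hconst : ∀ (n : ℕ) (h : n < M), y ⟨n, h⟩ = y ⟨0, by omega⟩ := by
          intro n
          induction n with
          | zero => intro h; rfl
          | succ n ih => intro h; rw [hadj n h, ih (by omega)]
        have h0M : (0:ℕ) < M := by omega
        have hsy : ∑ i, y i = (M : ℝ) * y ⟨0, h0M⟩ := by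
          have e : ∀ i : Fin M, y i = y ⟨0, h0M⟩ := fun i => hconst (i : ℕ) i.isLt
          calc ∑ i, y i = ∑ _i : Fin M, y ⟨0, h0M⟩ := Finset.sum_congr rfl (fun i _ => e i)
            _ = (M : ℝ) * y ⟨0, h0M⟩ := by
                rw [Finset.sum_const, Finset.card_univ, Fintype.card_fin, nsmul_eq_mul]
        have h0 : y ⟨0, h0M⟩ = 1 / (M : ℝ) := by
          rw [hy1] at hsy
          field_simp at hsy ⊢
          linarith
        funext i
        rw [hvN t i, if_pos ht0]
        exact (hconst (i : ℕ) i.isLt).trans h0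
      · -- nontrivial vertex
        have ht1 : 1 ≤ (t : ℕ) := by omega
        have htM : (t : ℕ) + 1 ≤ M := t.isLt
        set Y : ℕ → ℝ := fun n => if h : n < M then y ⟨n, h⟩ else 0 with hYdef
        have hYval : ∀ (n : ℕ) (h : n < M), Y n = y ⟨n, h⟩ := fun n h => dif_pos h
        have hlastY : Y (M - 1) = 0 := by
          have hvlast : v t ⟨M - 1, by omega⟩ = 0 := by
            rw [hvN t ⟨M - 1, by omega⟩, if_neg ht0]
            rw [show M - 1 - ((⟨M - 1, by omega⟩ : Fin M) : ℕ) = 0 from by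
              simp only [Fin.val_mk]; omega]
            simp
          have p1 := hpt ⟨M - 1, by omega⟩
          rw [hvlast] at p1
          have n1 := hy2 ⟨M - 1, by omega⟩
          have n2 := hz2 ⟨M - 1, by omega⟩
          rw [hYval (M - 1) (by omega)]
          nlinarith
        have hsecY : ∀ n, 1 ≤ n → n + 2 ≤ M → n ≠ M - 1 - (t : ℕ) →
            Y (n - 1) + Y (n + 1) = 2 * Y n := by
          intro n h1 h2 h3
          have hvn : v t ⟨n - 1, by omega⟩ + v t ⟨n + 1, by omega⟩ = 2 * v t ⟨n, by omega⟩ := by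
            rw [hvN t ⟨n - 1, by omega⟩, hvN t ⟨n + 1, by omega⟩, hvN t ⟨n, by omega⟩]
            rw [if_neg ht0, if_neg ht0, if_neg ht0]
            simp only [Fin.val_mk]
            have hmin : min (t : ℕ) (M - 1 - (n - 1)) + min (t : ℕ) (M - 1 - (n + 1))
                = 2 * min (t : ℕ) (M - 1 - n) := by omega
            have hcast : ((min (t : ℕ) (M - 1 - (n - 1)) : ℕ) : ℝ)
                + ((min (t : ℕ) (M - 1 - (n + 1)) : ℕ) : ℝ)
                = 2 * ((min (t : ℕ) (M - 1 - n) : ℕ) : ℝ) := by exact_mod_cast hmin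
            linear_combination rr (t : ℕ) * hcast
          have hyc := hy3 ⟨n, by omega⟩ (show 0 < n by omega) (show n < M - 1 by omega)
          have hzc := hz3 ⟨n, by omega⟩ (show 0 < n by omega) (show n < M - 1 by omega)
          have py := hpt ⟨n - 1, by omega⟩
          have pz := hpt ⟨n + 1, by omega⟩
          have pn := hpt ⟨n, by omega⟩
          have key : a * ((y ⟨n - 1, by omega⟩ + y ⟨n + 1, by omega⟩) - 2 * y ⟨n, by omega⟩)
              + b * ((z ⟨n - 1, by omega⟩ + z ⟨n + 1, by omega⟩) - 2 * z ⟨n, by omega⟩) = 0 := by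
            have : (⟨(↑(⟨n, by omega⟩ : Fin M) : ℕ) - 1, by omega⟩ : Fin M)
                = (⟨n - 1, by omega⟩ : Fin M) := rfl
            ring_nf
            ring_nf at py pz pn hvn
            linarith [py, pz, pn, hvn]
          obtain ⟨q1, q2⟩ := aux_tight a b _ _ ha hb (by linarith [hyc]) (by linarith [hzc]) key
          rw [hYval (n - 1) (by omega), hYval (n + 1) (by omega), hYval n (by omega)]
          linarith [q1]
        have hflatY : ∀ n, n + (t : ℕ) + 2 ≤ M → Y n = Y (n + 1) := by
          intro n hn
          have hvn : v t ⟨n, by omega⟩ = v t ⟨n + 1, by omega⟩ := by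
            rw [hvN t ⟨n, by omega⟩, hvN t ⟨n + 1, by omega⟩, if_neg ht0, if_neg ht0]
            simp only [Fin.val_mk]
            rw [show min (t : ℕ) (M - 1 - n) = (t : ℕ) from by omega,
              show min (t : ℕ) (M - 1 - (n + 1)) = (t : ℕ) from by omega]
          have e1 : y ⟨n + 1, by omega⟩ ≤ y ⟨n, by omega⟩ :=
            hy4 ⟨n, by omega⟩ ⟨n + 1, by omega⟩ (by simp [Fin.le_def])
          have e2 : z ⟨n + 1, by omega⟩ ≤ z ⟨n, by omega⟩ :=
            hz4 ⟨n, by omega⟩ ⟨n + 1, by omega⟩ (by simp [Fin.le_def])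
          have p1 := hpt ⟨n, by omega⟩
          have p2 := hpt ⟨n + 1, by omega⟩
          have key : a * (y ⟨n + 1, by omega⟩ - y ⟨n, by omega⟩)
              + b * (z ⟨n + 1, by omega⟩ - z ⟨n, by omega⟩) = 0 := by
            rw [hvn] at p1
            linarith [p1, p2]
          obtain ⟨q1, q2⟩ := aux_tight a b _ _ ha hb (by linarith [e1]) (by linarith [e2]) key
          rw [hYval n (by omega), hYval (n + 1) (by omega)]
          linarith [q1]
        have huniq := aux_uniq M (t : ℕ) hM ht1 htM Y hlastY hsecY hflatY
        have hYn : ∀ (n : ℕ) (h : n < M),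
            Y n = ((min (t : ℕ) (M - 1 - n) : ℕ) : ℝ) * Y (M - 2) := by
          intro n h
          have hq := huniq (M - 1 - n) (by omega)
          rw [show M - 1 - (M - 1 - n) = n from by omega] at hq
          exact hq
        have hsY : ∑ n ∈ Finset.range M, Y n = 1 := by
          rw [← hy1]
          rw [Finset.sum_congr rfl (fun (i : Fin M) (_ : i ∈ Finset.univ) => (hYval (i : ℕ) i.isLt).symm)]
          exact (Fin.sum_univ_eq_sum_range Y M).symm
        have hsum2 : (∑ n ∈ Finset.range M, ((min (t : ℕ) (M - 1 - n) : ℕ) : ℝ)) * Y (M - 2)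
            = 1 := by
          rw [← hsY, Finset.sum_mul]
          refine Finset.sum_congr rfl fun n hn => ?_
          rw [Finset.mem_range] at hn
          exact (hYn n hn).symm
        have hsmin := aux_summin M (t : ℕ) ht1 htM
        have hYM2 : Y (M - 2) = rr (t : ℕ) := by
          have hne : (2 * (M : ℝ) - (((t:ℕ) : ℝ) + 1)) * ((t:ℕ) : ℝ) ≠ 0 :=
            ne_of_gt (hrrden (t : ℕ) ht1 htM)
          rw [hrr]
          rw [eq_div_iff hne]
          calc Y (M - 2) * ((2 * (M : ℝ) - (((t:ℕ) : ℝ) + 1)) * ((t:ℕ) : ℝ))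
              = Y (M - 2) * (((t:ℕ) : ℝ) * (2 * (M : ℝ) - ((t:ℕ) : ℝ) - 1)) := by ring
            _ = Y (M - 2) * ((∑ n ∈ Finset.range M, ((min (t : ℕ) (M - 1 - n) : ℕ) : ℝ)) * 2) :=
                by rw [hsmin]
            _ = ((∑ n ∈ Finset.range M, ((min (t : ℕ) (M - 1 - n) : ℕ) : ℝ)) * Y (M - 2)) * 2 :=
                by ring
            _ = 2 := by rw [hsum2]; ring
        funext i
        have : y i = Y (i : ℕ) := (hYval (i : ℕ) i.isLt).symm
        rw [this, hYn (i : ℕ) i.isLt, hYM2, hvN t i, if_neg ht0]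
    intro x1 hx1 x2 hx2 hseg
    obtain ⟨a, b, ha, hb, hab, habv⟩ := hseg
    have hpt1 : ∀ i, a * x1 i + b * x2 i = v t i := by
      intro i
      have := congrFun habv i
      simpa using this
    constructor
    · exact claim a b x1 x2 ha hb hab hx1 hx2 hpt1
    · exact claim b a x2 x1 hb ha (by linarith) hx2 hx1 (fun i => by linarith [hpt1 i])
  -- conclusion
  have hhull : S = convexHull ℝ (Set.range v) :=
    Set.Subset.antisymm hdecomp
      (convexHull_min (by rintro _ ⟨t, rfl⟩; exact hvS t) hconvS)
  apply Set.Subset.antisymm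
  · rw [hhull]
    exact extremePoints_convexHull_subset
  · rintro _ ⟨t, rfl⟩
    exact hextreme t
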